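/- arXiv:2107.01029 — 6 statements merged into one kernel-verified Lean document; each statement's English description precedes it below -/
import Mathlib

section
/- a_HH(1) = 0, a_HH(2) = 1, and for all n ≥ 1, a_HH(n+2) = a_HH(n+1) + a_HH(n); that is, (a_HH(n)) is the Fibonacci sequence. -/
/-!
Reading a sequence from the front: a sequence of length `n + 3` whose first `HH` is at its end
cannot start with `HH`, so it is either `T` followed by such a sequence of length `n + 2`, or
`HT` followed by such a sequence of length `n + 1`. Hence the counts obey the Fibonacci recursion.
-/

/-- The number of binary sequences (lists of Booleans, `true` = H, `false` = T) of
length `n` in which the word `W` appears for the first time exactly at the end: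
`W` is a suffix of `l` and `W` does not occur as a contiguous sublist of `l` with
its last entry removed. -/
noncomputable def firstCount (W : List Bool) (n : ℕ) : ℕ :=
  Nat.card {l : List Bool // l.length = n ∧ W <:+ l ∧ ¬ (W <:+: l.dropLast)}

namespace List

def FirstOccursAtEnd {α : Type*} (W l : List α) : Prop :=
  W <:+ l ∧ ¬ W <:+: l.dropLast

def firstOccurrenceSet {α : Type*} (W : List α) (n : ℕ) : Set (List α) :=
  {l | l.length = n ∧ W.FirstOccursAtEnd l}

theorem firstOccurrenceSet_finite {α : Type*} [Finite α] (W : List α) (n : ℕ) :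
    (firstOccurrenceSet W n).Finite :=
  (finite_length_eq α n).subset fun _ hl => hl.1

theorem firstOccursAtEnd_HH_cons_false (l : List Bool) :
    [true, true].FirstOccursAtEnd (false :: l) ↔ [true, true].FirstOccursAtEnd l := by
  rcases eq_or_ne l [] with rfl | hl
  · simp only [FirstOccursAtEnd]; decide
  · simp [FirstOccursAtEnd, suffix_cons_iff, infix_cons_iff, dropLast_cons_of_ne_nil hl]

theorem firstOccursAtEnd_HH_cons_true_false (l : List Bool) :
    [true, true].FirstOccursAtEnd (true :: false :: l) ↔ [true, true].FirstOccursAtEnd l := by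
  rcases eq_or_ne l [] with rfl | hl
  · simp only [FirstOccursAtEnd]; decide
  · simp [FirstOccursAtEnd, suffix_cons_iff, infix_cons_iff, dropLast_cons_of_ne_nil hl]

theorem not_firstOccursAtEnd_HH_cons_true_true {l : List Bool} (hl : l ≠ []) :
    ¬ [true, true].FirstOccursAtEnd (true :: true :: l) := by
  simp [FirstOccursAtEnd, dropLast_cons_of_ne_nil hl, infix_cons_iff]

theorem firstOccurrenceSet_HH_one : firstOccurrenceSet [true, true] 1 = ∅ := by
  refine Set.eq_empty_of_forall_notMem fun l ⟨hlen, hsuf, _⟩ => ?_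
  simpa [hlen] using hsuf.length_le

theorem firstOccurrenceSet_HH_two : firstOccurrenceSet [true, true] 2 = {[true, true]} := by
  ext l
  constructor
  · rintro ⟨hlen, hsuf, -⟩
    exact (hsuf.eq_of_length (by simp [hlen])).symm
  · rintro rfl
    exact ⟨rfl, suffix_refl _, by decide⟩

theorem firstOccurrenceSet_HH_add_three (n : ℕ) :
    firstOccurrenceSet [true, true] (n + 3) =
      (false :: ·) '' firstOccurrenceSet [true, true] (n + 2) ∪
        (fun l => true :: false :: l) '' firstOccurrenceSet [true, true] (n + 1) := by
  ext l
  match l with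
  | [] => simp [firstOccurrenceSet]
  | [true] => simp [firstOccurrenceSet]
  | false :: t => simp [firstOccurrenceSet, firstOccursAtEnd_HH_cons_false]
  | true :: false :: t => simp [firstOccurrenceSet, firstOccursAtEnd_HH_cons_true_false]
  | true :: true :: t =>
    rcases eq_or_ne t [] with rfl | ht
    · simp [firstOccurrenceSet]
    simp [firstOccurrenceSet, not_firstOccursAtEnd_HH_cons_true_true ht]

end List

open List

theorem firstCount_eq_ncard (W : List Bool) (n : ℕ) :
    firstCount W n = (firstOccurrenceSet W n).ncard :=
  Nat.card_coe_set_eq _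

theorem firstCount_HH_add_three (n : ℕ) :
    firstCount [true, true] (n + 3) =
      firstCount [true, true] (n + 2) + firstCount [true, true] (n + 1) := by
  have hdisj : Disjoint ((false :: ·) '' firstOccurrenceSet [true, true] (n + 2))
      ((fun l => true :: false :: l) '' firstOccurrenceSet [true, true] (n + 1)) :=
    Set.disjoint_left.2 <| by rintro _ ⟨_, -, rfl⟩ ⟨_, -, h⟩; simp at h
  simp only [firstCount_eq_ncard, firstOccurrenceSet_HH_add_three]
  rw [Set.ncard_union_eq hdisj ((firstOccurrenceSet_finite _ _).image _)
      ((firstOccurrenceSet_finite _ _).image _),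
    Set.ncard_image_of_injective _ cons_injective,
    Set.ncard_image_of_injective _ fun _ _ h => by simpa using h]

theorem firstCount_HH_succ (n : ℕ) : firstCount [true, true] (n + 1) = Nat.fib n := by
  induction n using Nat.twoStepInduction with
  | zero => simp [firstCount_eq_ncard, firstOccurrenceSet_HH_one]
  | one => simp [firstCount_eq_ncard, firstOccurrenceSet_HH_two]
  | more n ih₁ ih₂ => rw [firstCount_HH_add_three, ih₁, ih₂, Nat.fib_add_two, add_comm]

theorem stmt_1 :
    firstCount [true, true] 1 = 0 ∧ firstCount [true, true] 2 = 1 ∧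
    (∀ n : ℕ, 1 ≤ n →
      firstCount [true, true] (n + 2)
        = firstCount [true, true] (n + 1) + firstCount [true, true] n) ∧
    (∀ n : ℕ, 1 ≤ n → firstCount [true, true] n = Nat.fib (n - 1)) := by
  refine ⟨firstCount_HH_succ 0, firstCount_HH_succ 1, ?_, ?_⟩
  · rintro (_ | n) hn
    · omega
    · exact firstCount_HH_add_three n
  · rintro (_ | n) hn
    · omega
    · exact firstCount_HH_succ n
end

section
/- For all n ≥ 1, a_HT(n) = n − 1. -/
namespace List

theorem not_infix_true_false_replicate_append_replicate (a b : ℕ) :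
    ¬ [true, false] <:+: replicate a false ++ replicate b true := by
  induction a with
  | zero =>
    intro h
    simpa using eq_of_mem_replicate (h.subset (mem_of_mem_getLast? rfl))
  | succ a ih =>
    rw [replicate_succ, cons_append, infix_cons_iff]
    rintro (⟨t, ht⟩ | h)
    · simp at ht
    · exact ih h

theorem exists_eq_replicate_append_replicate_of_not_infix {l : List Bool}
    (h : ¬ [true, false] <:+: l) : ∃ a b, l = replicate a false ++ replicate b true := by
  induction l with
  | nil => exact ⟨0, 0, rfl⟩
  | cons x l ih =>
    obtain ⟨a, b, rfl⟩ := ih fun hl => h (infix_cons hl)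
    match x, a with
    | false, a => exact ⟨a + 1, b, rfl⟩
    | true, 0 => exact ⟨0, b + 1, rfl⟩
    | true, a + 1 => exact absurd ⟨[], replicate a false ++ replicate b true, rfl⟩ h

theorem suffix_and_not_infix_dropLast_iff {l : List Bool} :
    [true, false] <:+ l ∧ ¬ [true, false] <:+: l.dropLast ↔
      ∃ a b, l = replicate a false ++ replicate (b + 1) true ++ [false] := by
  constructor
  · rintro ⟨⟨m, rfl⟩, h⟩
    rw [append_cons m true [false]] at h ⊢
    rw [dropLast_concat] at h
    obtain ⟨a, b, hab⟩ := exists_eq_replicate_append_replicate_of_not_infix h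
    match b, hab with
    | 0, hab => simpa [count_replicate] using congrArg (count true) hab
    | b + 1, hab => exact ⟨a, b, by rw [hab]⟩
  · rintro ⟨a, b, rfl⟩
    refine ⟨⟨replicate a false ++ replicate b true, by simp [replicate_succ']⟩, ?_⟩
    rw [dropLast_concat]
    exact not_infix_true_false_replicate_append_replicate a (b + 1)

end List

theorem stmt_2 : ∀ n : ℕ, 1 ≤ n → firstCount [true, false] n = n - 1 := by
  intro n _
  let f : Fin (n - 1) → List Bool := fun k =>
    List.replicate (n - 2 - k) false ++ List.replicate (k + 1) true ++ [false]
  have hf : f.Injective := fun k k' h =>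
    Fin.ext (by simpa [f, List.count_replicate] using congrArg (List.count true) h)
  have hmem (l : List Bool) :
      l.length = n ∧ [true, false] <:+ l ∧ ¬ [true, false] <:+: l.dropLast ↔
        l ∈ Set.range f := by
    rw [List.suffix_and_not_infix_dropLast_iff]
    constructor
    · rintro ⟨rfl, a, b, rfl⟩
      exact ⟨⟨b, by simp; omega⟩, by simp [f]; omega⟩
    · rintro ⟨k, rfl⟩
      exact ⟨by simp [f]; omega, _, _, rfl⟩
  rw [firstCount, Nat.card_congr (Equiv.subtypeEquivRight hmem), Nat.card_range_of_injective hf,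
    Nat.card_eq_fintype_card, Fintype.card_fin]
end

section
/- For every N ≥ 1, the probability that HT first appears at the N-th toss or later equals N/2^{N−1}; that is, 1 − ∑_{n=1}^{N−1} a_HT(n) · (1/2)^n = N / 2^{N−1}. -/
open List

lemma not_infix_true_false_iff {l : List Bool} :
    ¬ [true, false] <:+: l ↔ ∃ a b, l = replicate a false ++ replicate b true := by
  constructor
  · intro h
    induction l with
    | nil => exact ⟨0, 0, rfl⟩
    | cons x xs ih =>
      obtain ⟨a, b, rfl⟩ := ih fun h' => h (infix_cons h')
      cases x with
      | false => exact ⟨a + 1, b, rfl⟩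
      | true =>
        cases a with
        | zero => exact ⟨0, b + 1, rfl⟩
        | succ a =>
          exact absurd (prefix_append [true, false] _).isInfix (by simpa [replicate_succ] using h)
  · rintro ⟨a, b, rfl⟩ h
    induction a with
    | zero =>
      simpa using eq_of_mem_replicate (h.subset (by simp : false ∈ [true, false]))
    | succ a ih =>
      rcases infix_cons_iff.mp h with h | h
      · simp at h
      · exact ih h

lemma not_infix_true_false_append_true_iff {s : List Bool} :
    ¬ [true, false] <:+: s ++ [true] ↔ ∃ a b, s = replicate a false ++ replicate b true := by
  rw [not_infix_true_false_iff]
  constructor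
  · rintro ⟨a, b, hs⟩
    cases b with
    | zero =>
      have : true ∈ replicate a false := by
        simpa [hs] using mem_append_right s (mem_singleton_self true)
      simpa using eq_of_mem_replicate this
    | succ b => exact ⟨a, b, append_cancel_right (by simpa [replicate_succ'] using hs)⟩
  · rintro ⟨a, b, rfl⟩
    exact ⟨a, b + 1, by simp [replicate_succ']⟩

lemma firstOccurrence_true_false_iff {m : ℕ} {l : List Bool} :
    (l.length = m + 2 ∧ [true, false] <:+ l ∧ ¬ [true, false] <:+: l.dropLast) ↔
      ∃ a ∈ Finset.range (m + 1),
        replicate a false ++ replicate (m - a) true ++ [true, false] = l := by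
  constructor
  · rintro ⟨hlen, ⟨s, rfl⟩, hfirst⟩
    rw [show s ++ [true, false] = s ++ [true] ++ [false] by simp, dropLast_concat,
      not_infix_true_false_append_true_iff] at hfirst
    obtain ⟨a, b, rfl⟩ := hfirst
    simp only [length_append, length_replicate, length_cons, length_nil] at hlen
    exact ⟨a, Finset.mem_range.mpr (by omega), by rw [show m - a = b by omega]⟩
  · rintro ⟨a, ha, rfl⟩
    refine ⟨by simp at ha ⊢; omega, suffix_append _ _, ?_⟩
    rw [show ∀ s : List Bool, s ++ [true, false] = s ++ [true] ++ [false] by simp,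
      dropLast_concat, not_infix_true_false_append_true_iff]
    exact ⟨a, m - a, rfl⟩

lemma firstCount_true_false (n : ℕ) : firstCount [true, false] n = n - 1 := by
  rcases Nat.lt_or_ge n 2 with h | h
  · have : IsEmpty {l : List Bool // l.length = n ∧ [true, false] <:+ l ∧
        ¬ [true, false] <:+: l.dropLast} :=
      ⟨fun ⟨l, hlen, hsuf, _⟩ => by have := hsuf.length_le; simp at this; omega⟩
    rw [firstCount, Nat.card_of_isEmpty]
    omega
  · obtain ⟨m, rfl⟩ := Nat.exists_eq_add_of_le' h
    have hinj : Function.Injective fun a : ℕ =>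
        replicate a false ++ replicate (m - a) true ++ [true, false] := fun a a' h => by
      simpa [count_replicate] using congrArg (count false) h
    rw [firstCount, Nat.card_congr (Equiv.subtypeEquivRight fun l => by
      rw [firstOccurrence_true_false_iff, ← Finset.mem_image]), Nat.card_eq_finsetCard,
      Finset.card_image_of_injective _ hinj, Finset.card_range]
    rfl

lemma one_sub_sum_pred_mul_half_pow (N : ℕ) :
    1 - ∑ n ∈ Finset.Icc 1 N, ((n - 1 : ℕ) : ℝ) * (1 / 2) ^ n = (N + 1) / 2 ^ N := by
  induction N with
  | zero => simp
  | succ N ih =>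
    rw [Finset.sum_Icc_succ_top (by omega), ← sub_sub, ih]
    push_cast [Nat.add_sub_cancel]
    rw [div_pow, one_pow, pow_succ]
    field_simp
    ring

theorem stmt_4 :
    ∀ N : ℕ, 1 ≤ N →
      1 - ∑ n ∈ Finset.Icc 1 (N - 1), (firstCount [true, false] n : ℝ) * (1 / 2) ^ n
        = (N : ℝ) / 2 ^ (N - 1) := by
  rintro N hN
  obtain ⟨M, rfl⟩ := Nat.exists_eq_add_of_le' hN
  simp only [Nat.add_sub_cancel, firstCount_true_false]
  exact_mod_cast one_sub_sum_pred_mul_half_pow M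
end

section
/- For all n ≥ 1, a_HH(n) equals the nearest integer to (1/√5)·((1+√5)/2)^{n−1}; i.e., a_HH(n) = Round[(1/√5)·φ^{n−1}] where φ = (1+√5)/2. -/
/-!
A word of length `m + 2` in which HH first appears at the end is `s ++ HH` where `s ++ H` avoids
HH, i.e. `s` avoids HH and does not end in H. Splitting off the last letter, the HH-free words
of length `m` and those among them not ending in H satisfy the Fibonacci recursion and are
counted by `fib (m + 2)` and `fib (m + 1)`. Finally `fib k = (φ ^ k - ψ ^ k) / √5` with
`|ψ ^ k / √5| < 1 / 2`, so `fib k` is the integer nearest to `φ ^ k / √5`.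
-/

open Real goldenRatio

noncomputable def wordCount (P : List Bool → Prop) (m : ℕ) : ℕ :=
  {l : List Bool | l.length = m ∧ P l}.ncard

lemma wordCount_zero_of_nil {P : List Bool → Prop} (h : P []) : wordCount P 0 = 1 := by
  have : {l : List Bool | l.length = 0 ∧ P l} = {[]} := by
    ext l
    simp only [List.length_eq_zero_iff, Set.mem_ofPred_eq, Set.mem_singleton_iff,
      and_iff_left_iff_imp]
    rintro rfl
    exact h
  rw [wordCount, this, Set.ncard_singleton]

lemma wordCount_false (m : ℕ) : wordCount (fun _ => False) m = 0 := by
  simp [wordCount]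

lemma wordCount_succ (P : List Bool → Prop) (m : ℕ) :
    wordCount P (m + 1) =
      wordCount (fun l => P (l ++ [false])) m + wordCount (fun l => P (l ++ [true])) m := by
  have hsplit : {l : List Bool | l.length = m + 1 ∧ P l} =
      (· ++ [false]) '' {l | l.length = m ∧ P (l ++ [false])} ∪
        (· ++ [true]) '' {l | l.length = m ∧ P (l ++ [true])} := by
    ext l
    constructor
    · rintro ⟨hlen, hP⟩
      obtain ⟨t, c, rfl⟩ := (List.eq_nil_or_concat' l).resolve_left (by rintro rfl; simp at hlen)
      simp only [List.length_append, List.length_singleton,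
        Nat.add_right_cancel_iff] at hlen
      cases c
      exacts [Or.inl ⟨t, ⟨hlen, hP⟩, rfl⟩, Or.inr ⟨t, ⟨hlen, hP⟩, rfl⟩]
    · rintro (⟨t, ⟨hlen, hP⟩, rfl⟩ | ⟨t, ⟨hlen, hP⟩, rfl⟩) <;> exact ⟨by simp [hlen], hP⟩
  have hfin (Q : List Bool → Prop) : {l : List Bool | l.length = m ∧ Q l}.Finite :=
    (List.finite_length_eq Bool m).subset fun _ h => h.1
  have hdisj : Disjoint ((· ++ [false]) '' {l : List Bool | l.length = m ∧ P (l ++ [false])})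
      ((· ++ [true]) '' {l | l.length = m ∧ P (l ++ [true])}) := by
    rw [Set.disjoint_left]
    rintro _ ⟨t, -, rfl⟩ ⟨t', -, h⟩
    simpa using (List.append_inj' h rfl).2
  rw [wordCount, hsplit, Set.ncard_union_eq hdisj ((hfin _).image _) ((hfin _).image _),
    Set.ncard_image_of_injective _ (List.append_left_injective _),
    Set.ncard_image_of_injective _ (List.append_left_injective _)]
  rfl

lemma firstCount_add_length (W : List Bool) (m : ℕ) :
    firstCount W (m + W.length) = wordCount (fun s => ¬ W <:+: (s ++ W).dropLast) m := by
  have h : {l : List Bool | l.length = m + W.length ∧ W <:+ l ∧ ¬ W <:+: l.dropLast} =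
      (· ++ W) '' {s | s.length = m ∧ ¬ W <:+: (s ++ W).dropLast} := by
    ext l
    constructor
    · rintro ⟨hlen, ⟨s, rfl⟩, hW⟩
      exact ⟨s, ⟨by simpa using hlen, hW⟩, rfl⟩
    · rintro ⟨s, ⟨hlen, hW⟩, rfl⟩
      exact ⟨by simp [hlen], ⟨s, rfl⟩, hW⟩
  rw [firstCount, ← Set.coe_ofPred, Nat.card_coe_set_eq, h,
    Set.ncard_image_of_injective _ (List.append_left_injective _)]
  rfl

lemma firstCount_eq_zero_of_lt_length {W : List Bool} {n : ℕ} (hn : n < W.length) :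
    firstCount W n = 0 := by
  rw [firstCount, Nat.card_eq_zero]
  exact Or.inl ⟨fun ⟨l, hlen, hW, _⟩ => (hW.length_le.trans_eq hlen).not_gt hn⟩

def HHFree (l : List Bool) : Prop := ¬ [true, true] <:+: l

lemma hh_eq_append_singleton_iff {x : List Bool} {a : Bool} :
    [true, true] = x ++ [a] ↔ x = [true] ∧ a = true := by
  constructor
  · intro h
    have := List.append_inj' (h.symm.trans (by rfl : [true, true] = [true] ++ [true])) rfl
    simp_all
  · rintro ⟨rfl, rfl⟩
    rfl

lemma hhFree_append_false (l : List Bool) : HHFree (l ++ [false]) ↔ HHFree l := by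
  simp [HHFree, List.infix_concat_iff, List.suffix_concat_iff, hh_eq_append_singleton_iff]

lemma hhFree_append_true (l : List Bool) :
    HHFree (l ++ [true]) ↔ ¬ [true] <:+ l ∧ HHFree l := by
  simp [HHFree, List.infix_concat_iff, List.suffix_concat_iff, hh_eq_append_singleton_iff]

lemma wordCount_hhFree (m : ℕ) :
    wordCount HHFree m = Nat.fib (m + 2) ∧
      wordCount (fun l => ¬ [true] <:+ l ∧ HHFree l) m = Nat.fib (m + 1) := by
  induction m with
  | zero => exact ⟨wordCount_zero_of_nil (by unfold HHFree; decide),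
      wordCount_zero_of_nil (by unfold HHFree; decide)⟩
  | succ m ih =>
    obtain ⟨hFree, hNotH⟩ := ih
    rw [wordCount_succ, wordCount_succ]
    simp only [hhFree_append_false, hhFree_append_true,
      List.singleton_suffix_append_singleton_iff, Bool.true_eq_false, not_true_eq_false,
      not_false_eq_true, true_and, false_and, wordCount_false, hFree, hNotH]
    exact ⟨by rw [Nat.fib_add_two (n := m + 1), add_comm], rfl⟩

lemma firstCount_hh (m : ℕ) : firstCount [true, true] (m + 2) = Nat.fib (m + 1) := by
  refine (firstCount_add_length [true, true] m).trans ?_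
  rw [← (wordCount_hhFree m).2]
  congr! 2 with s
  rw [List.dropLast_append_of_ne_nil (by simp)]
  exact hhFree_append_true s

lemma abs_goldenConj_pow_div_sqrt_five_lt (k : ℕ) : |ψ ^ k / √5| < 1 / 2 := by
  have hψ : |ψ| ≤ 1 := abs_le.2 ⟨neg_one_lt_goldenConj.le, goldenConj_neg.le.trans zero_le_one⟩
  have h5 : (2 : ℝ) < √5 := by
    rw [Real.lt_sqrt zero_le_two]; norm_num
  rw [abs_div, abs_of_pos (by positivity : (0 : ℝ) < √5), abs_pow, div_lt_iff₀ (by positivity)]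
  nlinarith [pow_le_one₀ (n := k) (abs_nonneg ψ) hψ]

lemma round_goldenRatio_pow_div_sqrt_five (k : ℕ) : round (φ ^ k / √5) = Nat.fib k := by
  have h : φ ^ k / √5 = Nat.fib k + ψ ^ k / √5 := by
    rw [coe_fib_eq]; ring
  rw [h, round_natCast_add, round_eq_zero_iff.2, add_zero]
  have := abs_lt.1 (abs_goldenConj_pow_div_sqrt_five_lt k)
  exact ⟨this.1.le, this.2⟩

theorem stmt_5 :
    ∀ n : ℕ, 1 ≤ n →
      (firstCount [true, true] n : ℤ)
        = round ((1 / Real.sqrt 5) * ((1 + Real.sqrt 5) / 2) ^ (n - 1)) := by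
  intro n hn
  obtain ⟨m, rfl⟩ := Nat.exists_eq_add_of_le' hn
  rw [Nat.add_sub_cancel, one_div_mul_eq_div, round_goldenRatio_pow_div_sqrt_five]
  rcases m with _ | m
  · simp [firstCount_eq_zero_of_lt_length]
  · exact_mod_cast firstCount_hh m
end

section
/- a_HHH(1) = a_HHH(2) = 0, a_HHH(3) = 1, and for all n ≥ 1, a_HHH(n+3) = a_HHH(n+2) + a_HHH(n+1) + a_HHH(n). -/
namespace List

variable {α : Type*}

theorem eq_nil_of_prefix_cons_of_notMem {W q : List α} {a : α} (ha : a ∉ W)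
    (h : W <+: a :: q) : W = [] := by
  rcases prefix_cons_iff.mp h with hW | ⟨t, rfl, -⟩
  · exact hW
  · simp at ha

theorem infix_append_cons_iff_of_notMem {W p q : List α} {a : α} (ha : a ∉ W) :
    W <:+: p ++ a :: q ↔ W <:+: p ∨ W <:+: q := by
  refine ⟨fun h => ?_, fun h => h.elim infix_append_of_infix_left
    fun h => infix_append_of_infix_right (h.trans (suffix_cons a q).isInfix)⟩
  rcases infix_append_iff.mp h with hp | hq | ⟨l₁, l₂, rfl, hl₁, hl₂⟩
  · exact .inl hp
  · rcases infix_cons_iff.mp hq with hpre | hq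
    · exact .inl (by simp [eq_nil_of_prefix_cons_of_notMem ha hpre])
    · exact .inr hq
  · have hl₂ : l₂ = [] := eq_nil_of_prefix_cons_of_notMem (by simp_all) hl₂
    subst hl₂
    exact .inl (by simpa using hl₁.isInfix)

instance instFiniteLengthEqAnd (n : ℕ) (P : List α → Prop) [Finite α] :
    Finite {l : List α // l.length = n ∧ P l} :=
  ((finite_length_eq α n).subset fun _ h => h.1).to_subtype

end List

open List

noncomputable def avoidCount (W : List Bool) (n : ℕ) : ℕ :=
  Nat.card {l : List Bool // l.length = n ∧ ¬ W <:+: l}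

theorem firstCount_eq_zero_of_lt {W : List Bool} {n : ℕ} (h : n < W.length) :
    firstCount W n = 0 :=
  Nat.card_eq_zero.mpr <| .inl ⟨fun ⟨l, hl, hs, _⟩ => by
    have := hs.length_le
    omega⟩

theorem firstCount_length {W : List Bool} (hW : W ≠ []) : firstCount W W.length = 1 := by
  refine Nat.card_eq_one_iff_unique.mpr ⟨⟨fun ⟨l, hl, hs, _⟩ ⟨l', hl', hs', _⟩ => ?_⟩, ?_⟩
  · simp [← hs.eq_of_length hl.symm, ← hs'.eq_of_length hl'.symm]
  · refine ⟨W, rfl, suffix_refl W, fun h => ?_⟩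
    have := h.length_le
    have := length_pos_iff.mpr hW
    rw [length_dropLast] at *
    omega

theorem avoidCount_of_lt {W : List Bool} {n : ℕ} (h : n < W.length) :
    avoidCount W n = 2 ^ n := by
  have e : {l : List Bool // l.length = n ∧ ¬ W <:+: l} ≃ List.Vector Bool n :=
    Equiv.subtypeEquivRight fun l =>
      ⟨And.left, fun hl => ⟨hl, fun hi => by have := hi.length_le; omega⟩⟩
  rw [avoidCount, Nat.card_congr e, Nat.card_eq_fintype_card, card_vector, Fintype.card_bool]

section Runs

variable {b : Bool} {k : ℕ}

theorem replicate_infix_dropLast_append_cons_replicate_iff (hk : 0 < k) (p : List Bool)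
    (c : Bool) :
    replicate k b <:+: (p ++ c :: replicate k b).dropLast ↔ c = b ∨ replicate k b <:+: p := by
  obtain ⟨k, rfl⟩ := Nat.exists_eq_add_of_lt hk
  rw [Nat.zero_add, show p ++ c :: replicate (k + 1) b = p ++ c :: replicate k b ++ [b] by
    simp [replicate_succ'], dropLast_concat]
  cases c.eq_or_eq_not b with
  | inl hc =>
    subst hc
    simp only [true_or, iff_true]
    exact ⟨p, [], by simp [replicate_succ]⟩
  | inr hc =>
    subst hc
    rw [infix_append_cons_iff_of_notMem (by simp)]
    have : ¬ replicate (k + 1) b <:+: replicate k b := fun h => by simpa using h.length_le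
    simp [this]

theorem exists_eq_replicate_append_cons_not_of_not_prefix {l : List Bool}
    (h : ¬ replicate k b <+: l) (hl : k ≤ l.length) :
    ∃ i < k, ∃ r, l = replicate i b ++ (!b) :: r := by
  induction k generalizing l with
  | zero => simp at h
  | succ k ih =>
    obtain ⟨c, l, rfl⟩ := exists_cons_of_length_pos (by omega : 0 < l.length)
    cases c.eq_or_eq_not b with
    | inl hc =>
      subst hc
      obtain ⟨i, hi, r, rfl⟩ :=
        ih (fun h' => h (by simpa [replicate_succ] using h')) (by simpa using hl)
      exact ⟨i + 1, by omega, r, rfl⟩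
    | inr hc => exact ⟨0, k.succ_pos, l, by simp [hc]⟩

theorem replicate_append_cons_not_inj {i j : ℕ} {r s : List Bool} :
    replicate i b ++ (!b) :: r = replicate j b ++ (!b) :: s ↔ i = j ∧ r = s := by
  induction i generalizing j with
  | zero => cases j <;> simp [replicate_succ]
  | succ i ih => cases j <;> simp [replicate_succ, ih]

theorem firstCount_replicate (hk : 0 < k) (n : ℕ) :
    firstCount (replicate k b) (n + k + 1) = avoidCount (replicate k b) n := by
  symm
  refine Nat.card_congr
    (.ofBijective (fun p => ⟨p.1 ++ (!b) :: replicate k b, ?_, ?_, ?_⟩) ⟨?_, ?_⟩)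
  · simp [p.2.1]
    omega
  · exact (suffix_cons _ _).trans (suffix_append _ _)
  · rw [replicate_infix_dropLast_append_cons_replicate_iff hk]
    exact not_or.mpr ⟨Bool.not_ne_self b, p.2.2⟩
  · exact fun p q h => Subtype.ext (append_cancel_right (congrArg Subtype.val h))
  · rintro ⟨_, hl, ⟨m, rfl⟩, hfirst⟩
    obtain ⟨t, c, rfl⟩ := (eq_nil_or_concat m).resolve_left (by rintro rfl; simp at hl; omega)
    simp only [concat_eq_append, append_assoc, singleton_append,
      replicate_infix_dropLast_append_cons_replicate_iff hk, not_or] at hfirst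
    obtain ⟨hc, ht⟩ := hfirst
    refine ⟨⟨t, by simp at hl; omega, ht⟩, ?_⟩
    simp [Bool.eq_not_of_ne hc]

theorem avoidCount_replicate_add (n : ℕ) :
    avoidCount (replicate k b) (n + k) =
      ∑ i ∈ Finset.range k, avoidCount (replicate k b) (n + i) := by
  have e : (Σ i : Fin k, {r : List Bool // r.length = n + k - 1 - i ∧ ¬ replicate k b <:+: r}) ≃
      {l : List Bool // l.length = n + k ∧ ¬ replicate k b <:+: l} := by
    refine .ofBijective (fun x => ⟨replicate x.1 b ++ (!b) :: x.2.1, ?_, ?_⟩) ⟨?_, ?_⟩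
    · simp [x.2.2.1]
      omega
    · rw [infix_append_cons_iff_of_notMem (by simp)]
      exact not_or.mpr ⟨fun h => x.1.isLt.not_ge (by simpa using h.length_le), x.2.2.2⟩
    · rintro ⟨i, r⟩ ⟨j, s⟩ h
      obtain ⟨hij, hrs⟩ := replicate_append_cons_not_inj.mp (congrArg Subtype.val h)
      obtain rfl := Fin.ext hij
      obtain rfl := Subtype.ext hrs
      rfl
    · rintro ⟨l, hl, hW⟩
      obtain ⟨i, hi, r, rfl⟩ :=
        exists_eq_replicate_append_cons_not_of_not_prefix (fun h => hW h.isInfix) (by omega)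
      have hr : r.length = n + k - 1 - i := by simp at hl; omega
      have hr_free : ¬ replicate k b <:+: r :=
        fun h => hW (h.trans (suffix_append_of_suffix (suffix_cons _ _)).isInfix)
      exact ⟨⟨⟨i, hi⟩, r, hr, hr_free⟩, rfl⟩
  rw [avoidCount, ← Nat.card_congr e, Nat.card_sigma]
  change ∑ i : Fin k, avoidCount (replicate k b) (n + k - 1 - i) = _
  rw [Fin.sum_univ_eq_sum_range fun i => avoidCount (replicate k b) (n + k - 1 - i),
    ← Finset.sum_range_reflect]
  refine Finset.sum_congr rfl fun i hi => ?_
  rw [Finset.mem_range] at hi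
  congr 1
  omega

end Runs

theorem stmt_8 :
    firstCount [true, true, true] 1 = 0 ∧ firstCount [true, true, true] 2 = 0 ∧
    firstCount [true, true, true] 3 = 1 ∧
    ∀ n : ℕ, 1 ≤ n →
      firstCount [true, true, true] (n + 3)
        = firstCount [true, true, true] (n + 2) + firstCount [true, true, true] (n + 1)
          + firstCount [true, true, true] n := by
  set a := avoidCount (replicate 3 true)
  have f_lt {n : ℕ} (hn : n < 3) : firstCount [true, true, true] n = 0 :=
    firstCount_eq_zero_of_lt hn
  have f_three : firstCount [true, true, true] 3 = 1 := firstCount_length (cons_ne_nil _ _)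
  have f_add_four (n : ℕ) : firstCount [true, true, true] (n + 4) = a n :=
    firstCount_replicate (by norm_num) n
  have a_lt {n : ℕ} (hn : n < 3) : a n = 2 ^ n := avoidCount_of_lt (by simpa using hn)
  have a_rec (n : ℕ) : a (n + 3) = a (n + 2) + a (n + 1) + a n := by
    simp only [a, avoidCount_replicate_add, Finset.sum_range_succ, Finset.sum_range_zero,
      add_zero]
    omega
  refine ⟨f_lt (by norm_num), f_lt (by norm_num), f_three, fun n hn => ?_⟩
  match n, hn with
  | 1, _ =>
    rw [f_add_four 0, a_lt (by norm_num), f_three, f_lt (by norm_num), f_lt (by norm_num)]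
    norm_num
  | 2, _ =>
    rw [f_add_four 1, f_add_four 0, a_lt (by norm_num), a_lt (by norm_num), f_three,
      f_lt (by norm_num)]
    norm_num
  | 3, _ =>
    rw [f_add_four 2, f_add_four 1, f_add_four 0, a_lt (by norm_num), a_lt (by norm_num),
      a_lt (by norm_num), f_three]
    norm_num
  | m + 4, _ =>
    rw [f_add_four (m + 3), f_add_four (m + 2), f_add_four (m + 1), f_add_four m, a_rec]
end

section
/- For every m ≥ 1, the probability that HHH has not appeared within the first m tosses equals (2·a_HHH(m+3) − a_HHH(m))·(1/2)^m; that is, 1 − ∑_{n=1}^{m} a_HHH(n) · (1/2)^n = (2·a_HHH(m+3) − a_HHH(m)) / 2^m. -/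
namespace List

variable {α : Type*}

theorem infix_iff_suffix_or_infix_dropLast {l₁ l₂ : List α} :
    l₁ <:+: l₂ ↔ l₁ <:+ l₂ ∨ l₁ <:+: l₂.dropLast := by
  rcases eq_nil_or_concat l₂ with rfl | ⟨l, b, rfl⟩
  · simp
  · simpa using infix_concat_iff

theorem not_replicate_suffix_append_cons_replicate {a c : α} (hc : c ≠ a) {j k : ℕ}
    (hjk : j < k) (u : List α) : ¬ replicate k a <:+ u ++ c :: replicate j a := by
  intro h
  have hsuf : c :: replicate j a <:+ replicate k a :=
    suffix_of_suffix_length_le (suffix_append _ _) h (by simpa using hjk)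
  exact hc (eq_of_mem_replicate (hsuf.subset mem_cons_self))

theorem not_replicate_infix_append_cons_replicate {a c : α} (hc : c ≠ a) {j k : ℕ}
    (hjk : j < k) {u : List α} (hu : ¬ replicate k a <:+: u) :
    ¬ replicate k a <:+: u ++ c :: replicate j a := by
  induction j with
  | zero =>
    rw [replicate_zero, infix_concat_iff, not_or]
    exact ⟨not_replicate_suffix_append_cons_replicate hc hjk u, hu⟩
  | succ j ih =>
    have hsnoc : u ++ c :: replicate (j + 1) a = (u ++ c :: replicate j a) ++ [a] := by
      simp [replicate_succ']
    rw [hsnoc, infix_concat_iff, not_or, ← hsnoc]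
    exact ⟨not_replicate_suffix_append_cons_replicate hc hjk u, ih (by omega)⟩

end List

open List

theorem Nat.card_length_succ_dropLast {α : Type*} (P : List α → Prop) (n : ℕ) :
    Nat.card {l : List α // l.length = n + 1 ∧ P l.dropLast}
      = Nat.card {u : List α // u.length = n ∧ P u} * Nat.card α := by
  rw [← Nat.card_prod]
  refine Nat.card_congr
    { toFun l := (⟨l.1.dropLast, by simp [l.2.1], l.2.2⟩,
        l.1.getLast (ne_nil_of_length_eq_add_one l.2.1))
      invFun p := ⟨p.1.1 ++ [p.2], by simp [p.1.2.1], by simpa using p.1.2.2⟩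
      left_inv l := Subtype.ext (dropLast_append_getLast _)
      right_inv p := by ext <;> simp }

theorem avoidCount_zero {W : List Bool} (hW : W ≠ []) : avoidCount W 0 = 1 := by
  have hnil : {l : List Bool | l.length = 0 ∧ ¬ W <:+: l} = {[]} := by
    ext l
    simp +contextual [length_eq_zero_iff, hW]
  rw [avoidCount, ← Set.ncard_singleton ([] : List Bool), ← hnil, ← Nat.card_coe_set_eq]
  rfl

theorem avoidCount_succ_add_firstCount_succ (W : List Bool) (n : ℕ) :
    avoidCount W (n + 1) + firstCount W (n + 1) = 2 * avoidCount W n := by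
  have hsplit : {l : List Bool | l.length = n + 1 ∧ ¬ W <:+: l.dropLast}
      = {l | l.length = n + 1 ∧ ¬ W <:+: l}
        ∪ {l | l.length = n + 1 ∧ W <:+ l ∧ ¬ W <:+: l.dropLast} := by
    ext l
    simp only [Set.mem_ofPred_eq, Set.mem_union]
    rw [infix_iff_suffix_or_infix_dropLast (l₂ := l)]
    tauto
  have hdisj : Disjoint {l : List Bool | l.length = n + 1 ∧ ¬ W <:+: l}
      {l | l.length = n + 1 ∧ W <:+ l ∧ ¬ W <:+: l.dropLast} :=
    Set.disjoint_left.2 fun _ h h' => h.2 h'.2.1.isInfix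
  have hfin (P : List Bool → Prop) : {l : List Bool | l.length = n + 1 ∧ P l}.Finite :=
    (finite_length_eq Bool (n + 1)).subset fun _ h => h.1
  have hunion := Set.ncard_union_eq hdisj (hfin _) (hfin _)
  rw [← hsplit] at hunion
  simp only [← Nat.card_coe_set_eq] at hunion
  have hsnoc := Nat.card_length_succ_dropLast (fun u : List Bool => ¬ W <:+: u) n
  rw [Nat.card_eq_two_iff' true |>.2 ⟨false, by decide⟩] at hsnoc
  rw [avoidCount, avoidCount, firstCount, mul_comm]
  exact hunion.symm.trans hsnoc

theorem one_sub_sum_firstCount_mul_half_pow {W : List Bool} (hW : W ≠ []) (m : ℕ) :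
    1 - ∑ n ∈ Finset.Icc 1 m, (firstCount W n : ℝ) * (1 / 2) ^ n
      = avoidCount W m / 2 ^ m := by
  induction m with
  | zero => simp [avoidCount_zero hW]
  | succ m ih =>
    have hrec : (firstCount W (m + 1) : ℝ) = 2 * avoidCount W m - avoidCount W (m + 1) := by
      rw [eq_sub_iff_add_eq']
      exact_mod_cast avoidCount_succ_add_firstCount_succ W m
    rw [Finset.sum_Icc_succ_top (by omega), ← sub_sub, ih, hrec]
    simp only [one_div, inv_pow]
    field_simp
    ring

theorem firstCount_replicate_succ (a : Bool) (k n : ℕ) :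
    firstCount (replicate (k + 1) a) (n + k + 2) = avoidCount (replicate (k + 1) a) n := by
  have himage :
      {l : List Bool | l.length = n + k + 2 ∧ replicate (k + 1) a <:+ l ∧
        ¬ replicate (k + 1) a <:+: l.dropLast}
        = (· ++ (!a) :: replicate (k + 1) a) ''
          {u | u.length = n ∧ ¬ replicate (k + 1) a <:+: u} := by
    ext l
    constructor
    · rintro ⟨hlen, ⟨s, rfl⟩, hfirst⟩
      have hs : s ≠ [] := by
        rintro rfl
        simp at hlen
        omega
      obtain ⟨u, c, rfl⟩ : ∃ u c, s = u ++ [c] :=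
        ⟨s.dropLast, s.getLast hs, (dropLast_append_getLast hs).symm⟩
      have hdrop : u ++ [c] ++ replicate (k + 1) a = (u ++ c :: replicate k a) ++ [a] := by
        simp [replicate_succ']
      rw [hdrop, dropLast_concat] at hfirst
      have hc : c = !a := by
        rcases Bool.eq_or_eq_not c a with rfl | h
        · exact absurd ⟨u, [], by simp [replicate_succ]⟩ hfirst
        · exact h
      refine ⟨u, ⟨by simp at hlen; omega, fun h => hfirst (h.trans (prefix_append _ _).isInfix)⟩,
        by simp [hc]⟩
    · rintro ⟨u, ⟨hlen, hu⟩, rfl⟩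
      dsimp only
      refine ⟨by simp [hlen]; omega, (suffix_cons _ _).trans (suffix_append _ _), ?_⟩
      have hdrop : u ++ (!a) :: replicate (k + 1) a = (u ++ (!a) :: replicate k a) ++ [a] := by
        simp [replicate_succ']
      rw [hdrop, dropLast_concat]
      exact not_replicate_infix_append_cons_replicate (by simp) (Nat.lt_succ_self k) hu
  have hcard := Set.ncard_image_of_injective {u | u.length = n ∧ ¬ replicate (k + 1) a <:+: u}
    (append_left_injective ((!a) :: replicate (k + 1) a))
  rw [← himage] at hcard
  simp only [← Nat.card_coe_set_eq] at hcard
  exact hcard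

theorem stmt_16 :
    ∀ m : ℕ, 1 ≤ m →
      1 - ∑ n ∈ Finset.Icc 1 m, (firstCount [true, true, true] n : ℝ) * (1 / 2) ^ n
        = (2 * (firstCount [true, true, true] (m + 3) : ℝ)
            - (firstCount [true, true, true] m : ℝ)) / 2 ^ m := by
  intro m hm
  obtain ⟨j, rfl⟩ : ∃ j, m = j + 1 := ⟨m - 1, by omega⟩
  have hrun : firstCount [true, true, true] (j + 1 + 3) = avoidCount [true, true, true] j :=
    firstCount_replicate_succ true 2 j
  have hrec := avoidCount_succ_add_firstCount_succ [true, true, true] j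
  rw [one_sub_sum_firstCount_mul_half_pow (by simp), hrun]
  congr 1
  rw [eq_sub_iff_add_eq]
  exact_mod_cast hrec
end
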